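/- Let e(s) = q^s and ḡ(s) = q^{−(τ+1)s + 1/2}. Then on V₋ the operator identity W̄₀ ∘ M_e = M_e ∘ (Id − M_{ḡ} ∘ T_1) ∘ W̄₀ holds, i.e. the conjugate q^{M̄₀} = W̄₀ ∘ M_{q^s} ∘ W̄₀^{−1} equals q^s (1 − q^{−(τ+1)s + 1/2} Λ). -/
import Mathlib


/-- `c_0 = 1`, `c_n = q^{n/2} / ∏_{k=1}^n (1 − q^k)`, the coefficients of
`∏_{i=1}^∞ (1 − q^{i−1/2} x)^{−1} = Σ_{n≥0} c_n x^n`. -/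
noncomputable def ccoef (q : ℝ) (n : ℕ) : ℝ :=
  q ^ ((n : ℝ) / 2) / ∏ k ∈ Finset.range n, (1 - q ^ (k + 1))

/-- The dressing operator
`(W̄₀ f)(s) = q^{(τ+1)(s−1/2)²/2} Σ_{n≥0} c_n q^{(τ⁻¹+1)(s+n−1/2)²/2} f(s + n)`,
realizing `q^{(τ+1)(s−1/2)²/2} ∏_{i=1}^∞ (1 − q^{i−1/2} Λ)^{−1} q^{(τ⁻¹+1)(s−1/2)²/2}`;
on functions whose support is bounded above the sum has finitely many
nonzero terms. -/
noncomputable def Wb0 (q τ : ℝ) (f : ℝ → ℂ) : ℝ → ℂ := fun s =>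
  ((q ^ ((τ + 1) * (s - 1/2) ^ 2 / 2) : ℝ) : ℂ) *
    ∑ᶠ n : ℕ,
      ((ccoef q n : ℝ) : ℂ) *
        ((q ^ ((τ⁻¹ + 1) * (s + (n : ℝ) - 1/2) ^ 2 / 2) : ℝ) : ℂ) *
        f (s + (n : ℝ))

lemma ccoef_succ (q : ℝ) (hq0 : 0 < q) (hq1 : q < 1) (n : ℕ) :
    ccoef q (n + 1) * (q ^ (n + 1) - 1) = -(q ^ ((1:ℝ)/2)) * ccoef q n := by
  have hlt : ∀ m : ℕ, m ≠ 0 → q ^ m < 1 := fun m hm => pow_lt_one₀ hq0.le hq1 hm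
  have hP : ∀ m : ℕ, 0 < ∏ k ∈ Finset.range m, (1 - q ^ (k + 1)) := by
    intro m
    apply Finset.prod_pos
    intro k _
    have := hlt (k + 1) (Nat.succ_ne_zero _)
    linarith
  unfold ccoef
  rw [Finset.prod_range_succ]
  have h1 : q ^ ((((n:ℕ) + 1 : ℕ):ℝ)/2) = q ^ ((1:ℝ)/2) * q ^ ((n:ℝ)/2) := by
    rw [← Real.rpow_add hq0]
    congr 1
    push_cast; ring
  have hd1 : (1 - q ^ (n + 1)) ≠ 0 := by
    have := hlt (n + 1) (Nat.succ_ne_zero _); linarith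
  have hd2 := (hP n).ne'
  rw [h1]
  field_simp
  ring

lemma ccoef_succ' (q : ℝ) (hq0 : 0 < q) (hq1 : q < 1) (s : ℝ) (n : ℕ) :
    ccoef q (n + 1) * (q ^ (s + ((n + 1 : ℕ) : ℝ)) - q ^ s)
      = -(q ^ s * q ^ ((1:ℝ)/2)) * ccoef q n := by
  rw [Real.rpow_add hq0, Real.rpow_natCast]
  linear_combination (q ^ s) * ccoef_succ q hq0 hq1 n

lemma finsum_eq_range_sum (g : ℕ → ℂ) (N : ℕ) (h : ∀ n, N ≤ n → g n = 0) :
    ∑ᶠ n, g n = ∑ n ∈ Finset.range N, g n :=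
  finsum_eq_finset_sum_of_support_subset g (by
    intro n hn
    simp only [Finset.coe_range, Set.mem_Iio]
    by_contra hc
    exact hn (h n (le_of_not_gt hc)))

/-- On `V₋` (functions with support bounded above),
`W̄₀ ∘ M_{q^s} = M_{q^s} ∘ (Id − M_{ḡ} ∘ T_1) ∘ W̄₀` with
`ḡ(s) = q^{−(τ+1)s + 1/2}`; i.e.
`q^{M̄₀} = W̄₀ ∘ M_{q^s} ∘ W̄₀^{−1} = q^s (1 − q^{−(τ+1)s + 1/2} Λ)`. -/
theorem qMbar0_formula (q τ : ℝ) (hq0 : 0 < q) (hq1 : q < 1)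
    (hτ0 : τ ≠ 0) (hτ1 : τ ≠ -1)
    (f : ℝ → ℂ) (hf : BddAbove (Function.support f)) (s : ℝ) :
    Wb0 q τ (fun t => ((q ^ t : ℝ) : ℂ) * f t) s
      = ((q ^ s : ℝ) : ℂ) *
          (Wb0 q τ f s -
            ((q ^ (-(τ + 1) * s + 1/2) : ℝ) : ℂ) * Wb0 q τ f (s + 1)) := by
  obtain ⟨M, hM⟩ := hf
  obtain ⟨N, hN⟩ := exists_nat_gt (M - s)
  have hfz : ∀ t : ℝ, M < t → f t = 0 := by
    intro t ht
    by_contra h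
    exact absurd (hM (Function.mem_support.mpr h)) (not_le.mpr ht)
  have hfz1 : ∀ n : ℕ, N ≤ n → f (s + (n:ℝ)) = 0 := by
    intro n hn
    apply hfz
    have : (N:ℝ) ≤ n := Nat.cast_le.mpr hn
    linarith
  have hfz2 : ∀ n : ℕ, N ≤ n → f (s + 1 + (n:ℝ)) = 0 := by
    intro n hn
    apply hfz
    have : (N:ℝ) ≤ n := Nat.cast_le.mpr hn
    linarith
  simp only [Wb0]
  rw [finsum_eq_range_sum _ (N + 1) (fun n hn => by
        rw [hfz1 n (le_trans (Nat.le_succ N) hn), mul_zero, mul_zero]),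
      finsum_eq_range_sum _ (N + 1) (fun n hn => by
        rw [hfz1 n (le_trans (Nat.le_succ N) hn), mul_zero]),
      finsum_eq_range_sum _ (N + 1) (fun n hn => by
        rw [hfz2 n (le_trans (Nat.le_succ N) hn), mul_zero])]
  -- rewrite the shifted sum
  have hshift : ∀ n : ℕ,
      ((ccoef q n : ℝ) : ℂ) *
        ((q ^ ((τ⁻¹ + 1) * (s + 1 + (n : ℝ) - 1/2) ^ 2 / 2) : ℝ) : ℂ) *
        f (s + 1 + (n : ℝ))
      = ((ccoef q n : ℝ) : ℂ) *
        ((q ^ ((τ⁻¹ + 1) * (s + ((n + 1 : ℕ) : ℝ) - 1/2) ^ 2 / 2) : ℝ) : ℂ) *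
        f (s + ((n + 1 : ℕ) : ℝ)) := by
    intro n
    have e1 : (τ⁻¹ + 1) * (s + 1 + (n : ℝ) - 1/2) ^ 2 / 2
        = (τ⁻¹ + 1) * (s + ((n + 1 : ℕ) : ℝ) - 1/2) ^ 2 / 2 := by push_cast; ring
    have e2 : s + 1 + (n : ℝ) = s + ((n + 1 : ℕ) : ℝ) := by push_cast; ring
    rw [e1, e2]
  rw [Finset.sum_congr rfl (fun n _ => hshift n)]
  -- A-factor identity
  have hA : ((q ^ (-(τ + 1) * s + 1/2) : ℝ) : ℂ) *
        ((q ^ ((τ + 1) * (s + 1 - 1/2) ^ 2 / 2) : ℝ) : ℂ)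
      = ((q ^ ((1:ℝ)/2) : ℝ) : ℂ) * ((q ^ ((τ + 1) * (s - 1/2) ^ 2 / 2) : ℝ) : ℂ) := by
    have : (q ^ (-(τ + 1) * s + 1/2) : ℝ) * q ^ ((τ + 1) * (s + 1 - 1/2) ^ 2 / 2)
        = q ^ ((1:ℝ)/2) * q ^ ((τ + 1) * (s - 1/2) ^ 2 / 2) := by
      rw [← Real.rpow_add hq0, ← Real.rpow_add hq0]
      congr 1
      ring
    exact_mod_cast congrArg (Complex.ofReal) this
  -- set the three sums
  set S1 : ℂ := ∑ n ∈ Finset.range (N + 1),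
      ((ccoef q n : ℝ) : ℂ) *
        ((q ^ ((τ⁻¹ + 1) * (s + ((n + 1 : ℕ) : ℝ) - 1/2) ^ 2 / 2) : ℝ) : ℂ) *
        f (s + ((n + 1 : ℕ) : ℝ)) with hS1
  set S0 : ℂ := ∑ n ∈ Finset.range (N + 1),
      ((ccoef q n : ℝ) : ℂ) *
        ((q ^ ((τ⁻¹ + 1) * (s + (n : ℝ) - 1/2) ^ 2 / 2) : ℝ) : ℂ) *
        f (s + (n : ℝ)) with hS0
  set SL : ℂ := ∑ n ∈ Finset.range (N + 1),
      ((ccoef q n : ℝ) : ℂ) *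
        ((q ^ ((τ⁻¹ + 1) * (s + (n : ℝ) - 1/2) ^ 2 / 2) : ℝ) : ℂ) *
        (((q ^ (s + (n : ℝ)) : ℝ) : ℂ) * f (s + (n : ℝ))) with hSL
  -- key sum identity
  have key : SL - ((q ^ s : ℝ) : ℂ) * S0
      = -(((q ^ s : ℝ) : ℂ) * ((q ^ ((1:ℝ)/2) : ℝ) : ℂ)) * S1 := by
    rw [hSL, hS0, hS1, Finset.mul_sum, ← Finset.sum_sub_distrib]
    have hg : ∀ n : ℕ,
        ((ccoef q n : ℝ) : ℂ) *
            ((q ^ ((τ⁻¹ + 1) * (s + (n : ℝ) - 1/2) ^ 2 / 2) : ℝ) : ℂ) *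
            (((q ^ (s + (n : ℝ)) : ℝ) : ℂ) * f (s + (n : ℝ))) -
          ((q ^ s : ℝ) : ℂ) *
            (((ccoef q n : ℝ) : ℂ) *
              ((q ^ ((τ⁻¹ + 1) * (s + (n : ℝ) - 1/2) ^ 2 / 2) : ℝ) : ℂ) *
              f (s + (n : ℝ)))
        = (((ccoef q n * (q ^ (s + (n : ℝ)) - q ^ s) : ℝ) : ℂ)) *
            ((q ^ ((τ⁻¹ + 1) * (s + (n : ℝ) - 1/2) ^ 2 / 2) : ℝ) : ℂ) *
            f (s + (n : ℝ)) := by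
      intro n; push_cast; ring
    rw [Finset.sum_congr rfl (fun n _ => hg n)]
    rw [Finset.sum_range_succ' _ N, Finset.sum_range_succ _ N]
    have h0 : ((ccoef q 0 * (q ^ (s + ((0:ℕ) : ℝ)) - q ^ s) : ℝ) : ℂ) *
        ((q ^ ((τ⁻¹ + 1) * (s + ((0:ℕ) : ℝ) - 1/2) ^ 2 / 2) : ℝ) : ℂ) *
        f (s + ((0:ℕ) : ℝ)) = 0 := by
      norm_num
    have hNterm : ((ccoef q N : ℝ) : ℂ) *
        ((q ^ ((τ⁻¹ + 1) * (s + ((N + 1 : ℕ) : ℝ) - 1/2) ^ 2 / 2) : ℝ) : ℂ) *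
        f (s + ((N + 1 : ℕ) : ℝ)) = 0 := by
      have : f (s + ((N + 1 : ℕ) : ℝ)) = 0 := by
        have := hfz1 (N + 1) (Nat.le_succ N)
        exact this
      rw [this, mul_zero]
    rw [h0, hNterm, add_zero, add_zero, Finset.mul_sum]
    refine Finset.sum_congr rfl (fun n _ => ?_)
    have := ccoef_succ' q hq0 hq1 s n
    have hc : ((ccoef q (n + 1) * (q ^ (s + ((n + 1 : ℕ) : ℝ)) - q ^ s) : ℝ) : ℂ)
        = ((-(q ^ s * q ^ ((1:ℝ)/2)) * ccoef q n : ℝ) : ℂ) := by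
      exact_mod_cast congrArg Complex.ofReal this
    push_cast at hc ⊢
    rw [hc]
    ring
  linear_combination key * ((q ^ ((τ + 1) * (s - 1/2) ^ 2 / 2) : ℝ) : ℂ)
      + (((q ^ s : ℝ) : ℂ) * S1) * hA
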